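/- arXiv:2112.04416 — 3 statements merged into one kernel-verified Lean document; each statement's English description precedes it below -/
import Mathlib

section
/- For the Thue–Morse word t, if i is an even natural number, then the periodicity function satisfies p_t(i) ∈ {1, 2}. -/
open Finset Filter Asymptotics

/-- `n` is a local period of the infinite word `w` at position `i`:
`n ≥ 1` and either (`n ≤ i` and `w_{i+k} = w_{i-n+k}` for all `k < n`)
or (`n > i` and `w_k = w_{n+k}` for all `k < i`). -/
def IsLocalPeriodAt {α : Type*} (w : ℕ → α) (i n : ℕ) : Prop :=
  1 ≤ n ∧ ((n ≤ i ∧ ∀ k < n, w (i + k) = w (i - n + k)) ∨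
           (i < n ∧ ∀ k < i, w k = w (n + k)))

/-- The periodicity function `p_w(i)`: the least local period of `w` at `i`. -/
noncomputable def perFn {α : Type*} (w : ℕ → α) (i : ℕ) : ℕ :=
  sInf {n | IsLocalPeriodAt w i n}

/-- The summatory function `P_w(n) = ∑_{j<n} p_w(j)`. -/
noncomputable def sumFn {α : Type*} (w : ℕ → α) (n : ℕ) : ℕ :=
  ∑ j ∈ Finset.range n, perFn w j

/-- The periodic complexity `h_w(n) = P_w(n)/n`. -/
noncomputable def perComplexity {α : Type*} (w : ℕ → α) (n : ℕ) : ℝ :=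
  (sumFn w n : ℝ) / n

/-- The Thue–Morse word: `t_i = 0` iff the number of 1's in the binary
representation of `i` is even. -/
def tm (i : ℕ) : ℕ :=
  if Even ((Nat.digits 2 i).count 1) then 0 else 1

lemma tm_cases (n : ℕ) : tm n = 0 ∨ tm n = 1 := by
  unfold tm; split <;> simp

lemma tm_two_mul (m : ℕ) : tm (2 * m) = tm m := by
  rcases Nat.eq_zero_or_pos m with h | h
  · subst h; rfl
  · unfold tm
    rw [Nat.digits_def' (by norm_num : 1 < 2) (by omega)]
    have h1 : 2 * m % 2 = 0 := by omega
    have h2 : 2 * m / 2 = m := by omega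
    rw [h1, h2]
    simp

lemma tm_two_mul_add_one (m : ℕ) : tm (2 * m + 1) ≠ tm m := by
  unfold tm
  rw [Nat.digits_def' (by norm_num : 1 < 2) (by omega)]
  have h1 : (2 * m + 1) % 2 = 1 := by omega
  have h2 : (2 * m + 1) / 2 = m := by omega
  rw [h1, h2]
  simp only [List.count_cons_self, Nat.even_add_one]
  by_cases h : Even ((Nat.digits 2 m).count 1) <;> simp [h]

theorem tm_perFn_even (i : ℕ) (hi : Even i) :
    perFn tm i ∈ ({1, 2} : Set ℕ) := by
  obtain ⟨m, rfl⟩ := hi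
  have hmm : m + m = 2 * m := by ring
  rw [hmm]
  have key : ∃ n ∈ {n | IsLocalPeriodAt tm (2 * m) n}, n ≤ 2 := by
    rcases Nat.eq_zero_or_pos m with h0 | h0
    · refine ⟨1, ?_, by norm_num⟩
      subst h0
      exact ⟨le_refl 1, Or.inr ⟨by norm_num, fun k hk => by omega⟩⟩
    · by_cases hcase : tm m = tm (m - 1)
      · -- period 2
        refine ⟨2, ⟨by norm_num, Or.inl ⟨by omega, ?_⟩⟩, le_refl 2⟩
        intro k hk
        interval_cases k
        · have e1 : tm (2 * m + 0) = tm m := by rw [Nat.add_zero, tm_two_mul]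
          have e2 : tm (2 * m - 2 + 0) = tm (m - 1) := by
            have : 2 * m - 2 + 0 = 2 * (m - 1) := by omega
            rw [this, tm_two_mul]
          rw [e1, e2, hcase]
        · have e1 : tm (2 * m + 1) ≠ tm m := tm_two_mul_add_one m
          have e2 : tm (2 * m - 2 + 1) ≠ tm (m - 1) := by
            have : 2 * m - 2 + 1 = 2 * (m - 1) + 1 := by omega
            rw [this]; exact tm_two_mul_add_one (m - 1)
          rcases tm_cases (2 * m + 1) with h1 | h1 <;>
          rcases tm_cases (2 * m - 2 + 1) with h2 | h2 <;>
          rcases tm_cases m with h3 | h3 <;>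
          rcases tm_cases (m - 1) with h4 | h4 <;> omega
      · -- period 1
        refine ⟨1, ⟨le_refl 1, Or.inl ⟨by omega, ?_⟩⟩, by norm_num⟩
        intro k hk
        interval_cases k
        have e1 : tm (2 * m + 0) = tm m := by rw [Nat.add_zero, tm_two_mul]
        have e2 : tm (2 * m - 1 + 0) ≠ tm (m - 1) := by
          have : 2 * m - 1 + 0 = 2 * (m - 1) + 1 := by omega
          rw [this]; exact tm_two_mul_add_one (m - 1)
        rcases tm_cases (2 * m + 0) with h1 | h1 <;>
        rcases tm_cases (2 * m - 1 + 0) with h2 | h2 <;>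
        rcases tm_cases m with h3 | h3 <;>
        rcases tm_cases (m - 1) with h4 | h4 <;> omega
  obtain ⟨n, hn, hn2⟩ := key
  have hne : {n | IsLocalPeriodAt tm (2 * m) n}.Nonempty := ⟨n, hn⟩
  have hle : perFn tm (2 * m) ≤ 2 := le_trans (Nat.sInf_le hn) hn2
  have hmem := Nat.sInf_mem hne
  have hge : 1 ≤ perFn tm (2 * m) := hmem.1
  simp only [Set.mem_insert_iff, Set.mem_singleton_iff]
  omega
end

section
/- For all n ≥ 1, the summatory function of the periodicity function of the Thue–Morse word satisfies (3/8)(n−1)² + n/2 ≤ P_t(n) ≤ (3/4)n² + n + 1. -/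
open Finset Filter Asymptotics

/-!
Write `t = tm` and `p = perFn tm`. Since `t (2x + r) = t x + r mod 2`, the word is
overlap-free (halve an overlap of even period; one of odd period forces alternation, which
clashes with the pairs `t (2x) ≠ t (2x + 1)`), and consequently every square of `t` is centred
at an even position.
At an even position a square of period 1 or 2 is centred, so `p (2m) ∈ {1, 2}`. At an odd
position `j` no square is centred, so `p j` is a reoccurrence of the prefix of length `j`;
halving shows such reoccurrences lie beyond `3j/2`, and one lies at
`3 · 2 ^ ⌊log₂ j⌋ ≤ 3j`. Hence `3n + 3 ≤ 2 (p n + p (n+1))` and `p n + p (n+1) ≤ 3n + 5`,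
to be compared with the two-step increments `3n/2 + 1` and `3n + 5` of the two bounds.
-/

lemma tm_le_one (i : ℕ) : tm i ≤ 1 := by
  unfold tm; split <;> simp

lemma tm_two_mul_add (x : ℕ) {r : ℕ} (hr : r < 2) : tm (2 * x + r) = (tm x + r) % 2 := by
  rcases Nat.eq_zero_or_pos x with rfl | hx
  · interval_cases r <;> decide
  · unfold tm
    rw [add_comm, Nat.digits_add 2 one_lt_two r x hr (Or.inr hx.ne')]
    interval_cases r <;> by_cases h : Even ((Nat.digits 2 x).count 1) <;>
      simp [Nat.even_add_one, h]

lemma tm_two_mul_add_eq_iff {x y r : ℕ} (hr : r < 2) :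
    tm (2 * x + r) = tm (2 * y + r) ↔ tm x = tm y := by
  rw [tm_two_mul_add x hr, tm_two_mul_add y hr]
  have := tm_le_one x; have := tm_le_one y
  omega

lemma tm_succ_ne_of_even {x : ℕ} (hx : Even x) : tm (x + 1) ≠ tm x := by
  obtain ⟨y, rfl⟩ := hx.two_dvd
  have h₀ : tm (2 * y) = tm y % 2 := tm_two_mul_add y two_pos
  have h₁ := tm_two_mul_add y one_lt_two
  have := tm_le_one y
  omega

lemma even_add_of_tm_square_of_odd {a p : ℕ} (hp : Odd p)
    (h : ∀ k < p, tm (a + k) = tm (a + k + p)) : Even (a + p) := by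
  -- the first `p` letters alternate, so the letters at `a + p - 1` and `a + p` coincide
  have alternating : ∀ k, k + 1 < p → tm (a + k + 1) ≠ tm (a + k) := by
    intro k hk
    rcases Nat.even_or_odd (a + k) with he | ho
    · exact tm_succ_ne_of_even he
    · rw [h k (by omega), add_assoc, h (k + 1) hk, ← add_assoc, add_right_comm]
      exact tm_succ_ne_of_even (ho.add_odd hp)
  have periodic : ∀ i, 2 * i < p → tm (a + 2 * i) = tm a := by
    intro i hi
    induction i with
    | zero => rfl
    | succ i ih =>
      have h₁ := alternating (2 * i) (by omega)
      have h₂ : tm (a + 2 * i + 1 + 1) ≠ tm (a + 2 * i + 1) :=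
        alternating (2 * i + 1) (by omega)
      have := tm_le_one (a + 2 * i); have := tm_le_one (a + 2 * i + 1)
      have := tm_le_one (a + 2 * i + 1 + 1)
      rw [show a + 2 * (i + 1) = a + 2 * i + 1 + 1 by ring, ← ih (by omega)]
      omega
  obtain ⟨d, rfl⟩ := hp
  by_contra hodd
  have hpair := tm_succ_ne_of_even (x := a + 2 * d) <| by
    simpa [← add_assoc, Nat.even_add_one] using hodd
  have h₀ : tm a = tm (a + 2 * d + 1) := by simpa [add_assoc] using h 0 (by omega)
  rw [periodic d (by omega)] at hpair
  exact hpair h₀.symm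

theorem tm_not_overlap {p : ℕ} (hp : 0 < p) (a : ℕ) :
    ¬ ∀ k ≤ p, tm (a + k) = tm (a + k + p) := by
  induction p using Nat.strong_induction_on generalizing a with
  | _ p ih =>
  intro h
  rcases Nat.even_or_odd p with ⟨s, rfl⟩ | hodd
  · refine ih s (by omega) (by omega) (a / 2) fun i hi => ?_
    have := h (2 * i) (by omega)
    rwa [show a + 2 * i = 2 * (a / 2 + i) + a % 2 by omega,
      show 2 * (a / 2 + i) + a % 2 + (s + s) = 2 * (a / 2 + i + s) + a % 2 by omega,
      tm_two_mul_add_eq_iff (Nat.mod_lt a two_pos)] at this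
  · have h₀ := even_add_of_tm_square_of_odd hodd fun k hk => h k hk.le
    have h₁ := even_add_of_tm_square_of_odd (a := a + 1) hodd fun k hk => by
      simpa only [add_assoc, add_comm 1 k] using h (k + 1) hk
    rw [add_right_comm] at h₁
    exact Nat.not_even_iff_odd.mpr h₀.add_one h₁

theorem even_add_of_tm_square {a p : ℕ} (hp : 0 < p)
    (h : ∀ k < p, tm (a + k) = tm (a + k + p)) : Even (a + p) := by
  rcases Nat.even_or_odd p with hev | hodd
  · by_contra hcenter
    obtain ⟨c, rfl⟩ := Nat.not_even_iff_odd.mp fun ha : Even a => hcenter (ha.add hev)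
    obtain ⟨s, rfl⟩ := hev.two_dvd
    -- `t (2c)` is determined by `t (2c + 1)`, so the square extends one letter to the left
    refine tm_not_overlap hp (2 * c) fun k hk => ?_
    rcases k with _ | k
    · rw [show 2 * c + 0 + 2 * s = 2 * (c + s) + 0 by ring, tm_two_mul_add_eq_iff two_pos]
      have := h 0 hp
      rwa [add_zero, show 2 * c + 1 + 2 * s = 2 * (c + s) + 1 by ring,
        tm_two_mul_add_eq_iff one_lt_two] at this
    · have := h k (by omega)
      rwa [show 2 * c + 1 + k = 2 * c + (k + 1) by ring] at this
  · exact even_add_of_tm_square_of_odd hodd h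

theorem three_mul_le_two_mul_of_tm_prefix_occurrence {L n : ℕ} (hL : 0 < L) (hn : 0 < n)
    (h : ∀ k < L, tm k = tm (n + k)) : 3 * L ≤ 2 * n := by
  induction L using Nat.strong_induction_on generalizing n with
  | _ L ih =>
  have hn₁ : n ≠ 1 := by
    rintro rfl
    exact absurd (h 0 hL) (by decide)
  rcases Nat.even_or_odd n with hev | hodd
  · obtain ⟨s, rfl⟩ := hev.two_dvd
    rcases Nat.lt_or_ge L 2 with hL₂ | hL₂
    · omega
    · have := ih ((L + 1) / 2) (by omega) (by omega) (n := s) (by omega) fun k hk => by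
        have := h (2 * k) (by omega)
        rw [← mul_add] at this
        exact (tm_two_mul_add_eq_iff two_pos).mp this
      omega
  · have hn₃ : 3 ≤ n := by obtain ⟨d, rfl⟩ := hodd; omega
    by_contra hlong
    have h₁ := h 1 (by omega)
    have h₂ := h 2 (by omega)
    have hpair := tm_succ_ne_of_even (x := n + 1) hodd.add_one
    rw [← h₁, ← h₂] at hpair
    exact hpair (by decide)

theorem tm_three_mul_two_pow_add {k i : ℕ} (hi : i < 2 ^ (k + 1)) :
    tm (3 * 2 ^ k + i) = tm i := by
  induction k generalizing i with
  | zero => interval_cases i <;> decide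
  | succ k ih =>
    rw [pow_succ] at hi
    conv_rhs => rw [← Nat.div_add_mod i 2]
    rw [show 3 * 2 ^ (k + 1) + i = 2 * (3 * 2 ^ k + i / 2) + i % 2 by rw [pow_succ]; omega,
      tm_two_mul_add_eq_iff (Nat.mod_lt i two_pos)]
    exact ih (by omega)

theorem tm_isLocalPeriodAt_of_even {j : ℕ} (hj : Even j) :
    ∃ n ≤ 2, IsLocalPeriodAt tm j n := by
  obtain ⟨m, rfl⟩ := hj.two_dvd
  rcases Nat.eq_zero_or_pos m with rfl | hm
  · exact ⟨1, one_le_two, le_rfl, Or.inr ⟨one_pos, fun k hk => absurd hk k.not_lt_zero⟩⟩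
  by_cases h₁ : tm (2 * m) = tm (2 * m - 1)
  · refine ⟨1, one_le_two, le_rfl, Or.inl ⟨by omega, fun k hk => ?_⟩⟩
    obtain rfl : k = 0 := by omega
    exact h₁
  · refine ⟨2, le_rfl, one_le_two, Or.inl ⟨by omega, fun k hk => ?_⟩⟩
    have hm₁ : tm m = tm (m - 1) := by
      have h₀ : tm (2 * m) = tm m % 2 := tm_two_mul_add m two_pos
      have h₂ := tm_two_mul_add (m - 1) one_lt_two
      rw [show 2 * (m - 1) + 1 = 2 * m - 1 by omega] at h₂
      have := tm_le_one m; have := tm_le_one (m - 1)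
      omega
    rw [show 2 * m - 2 + k = 2 * (m - 1) + k by omega, tm_two_mul_add_eq_iff hk]
    exact hm₁

theorem tm_isLocalPeriodAt_three_mul_two_pow_log {j : ℕ} (hj : 0 < j) :
    IsLocalPeriodAt tm j (3 * 2 ^ Nat.log 2 j) := by
  have hlo : 2 ^ Nat.log 2 j ≤ j := Nat.pow_log_le_self 2 hj.ne'
  have hhi : j < 2 ^ (Nat.log 2 j + 1) := Nat.lt_pow_succ_log_self one_lt_two j
  refine ⟨by omega, Or.inr ⟨by rw [pow_succ] at hhi; omega, fun k hk => ?_⟩⟩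
  exact (tm_three_mul_two_pow_add (by omega)).symm

section LocalPeriod

variable {α : Type*} {w : ℕ → α} {i n : ℕ}

lemma perFn_le (h : IsLocalPeriodAt w i n) : perFn w i ≤ n := Nat.sInf_le h

lemma isLocalPeriodAt_perFn (h : IsLocalPeriodAt w i n) : IsLocalPeriodAt w i (perFn w i) :=
  Nat.sInf_mem (s := {n | IsLocalPeriodAt w i n}) ⟨n, h⟩

lemma sumFn_add_two (w : ℕ → α) (n : ℕ) :
    sumFn w (n + 2) = sumFn w n + perFn w n + perFn w (n + 1) := by
  simp only [sumFn, Finset.sum_range_succ]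

end LocalPeriod

theorem perFn_tm_of_even {j : ℕ} (hj : Even j) : 1 ≤ perFn tm j ∧ perFn tm j ≤ 2 := by
  obtain ⟨n, hn₂, hn⟩ := tm_isLocalPeriodAt_of_even hj
  exact ⟨(isLocalPeriodAt_perFn hn).1, (perFn_le hn).trans hn₂⟩

theorem perFn_tm_of_odd {j : ℕ} (hj : Odd j) :
    3 * j < 2 * perFn tm j ∧ perFn tm j ≤ 3 * j := by
  have hj₀ : 0 < j := hj.pos
  have hper := tm_isLocalPeriodAt_three_mul_two_pow_log hj₀
  have hlog : 2 ^ Nat.log 2 j ≤ j := Nat.pow_log_le_self 2 hj₀.ne'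
  refine ⟨?_, (perFn_le hper).trans (by omega)⟩
  obtain ⟨hpos, ⟨hle, hsquare⟩ | ⟨hlt, hprefix⟩⟩ := isLocalPeriodAt_perFn hper
  · refine absurd (even_add_of_tm_square (a := j - perFn tm j) hpos fun k hk => ?_) ?_
    · rw [show j - perFn tm j + k + perFn tm j = j + k by omega]
      exact (hsquare k hk).symm
    · rw [Nat.sub_add_cancel hle]
      exact Nat.not_even_iff_odd.mpr hj
  · have := three_mul_le_two_mul_of_tm_prefix_occurrence hj₀ (by omega) hprefix
    obtain ⟨m, rfl⟩ := hj
    omega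

theorem perFn_tm_add_perFn_tm_succ (n : ℕ) :
    3 * n + 3 ≤ 2 * (perFn tm n + perFn tm (n + 1)) ∧
      perFn tm n + perFn tm (n + 1) ≤ 3 * n + 5 := by
  rcases Nat.even_or_odd n with hn | hn
  · have := perFn_tm_of_even hn; have := perFn_tm_of_odd hn.add_one; omega
  · have := perFn_tm_of_odd hn; have := perFn_tm_of_even hn.add_one; omega

theorem le_of_two_step_increment_le {β : Type*} [AddCommGroup β] [PartialOrder β]
    [IsOrderedAddMonoid β] {s t : ℕ → β} {n₀ : ℕ} (h₀ : s n₀ ≤ t n₀)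
    (h₁ : s (n₀ + 1) ≤ t (n₀ + 1))
    (step : ∀ n ≥ n₀, s (n + 2) - s n ≤ t (n + 2) - t n)
    {n : ℕ} (hn : n₀ ≤ n) : s n ≤ t n := by
  induction n using Nat.strong_induction_on with
  | _ n ih =>
  rcases (show n = n₀ ∨ n = n₀ + 1 ∨ n₀ + 2 ≤ n by omega) with rfl | rfl | hn₂
  · exact h₀
  · exact h₁
  · obtain ⟨m, rfl⟩ : ∃ m, n = m + 2 := ⟨n - 2, by omega⟩
    have := add_le_add (ih m (by omega) (by omega)) (step m (by omega))
    rwa [add_sub_cancel, add_sub_cancel] at this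

theorem tm_sumFn_bounds (n : ℕ) (hn : 1 ≤ n) :
    (3 / 8 : ℝ) * ((n : ℝ) - 1) ^ 2 + (n : ℝ) / 2 ≤ (sumFn tm n : ℝ) ∧
      (sumFn tm n : ℝ) ≤ (3 / 4 : ℝ) * (n : ℝ) ^ 2 + (n : ℝ) + 1 := by
  have increment (m : ℕ) :
      (sumFn tm (m + 2) : ℝ) - sumFn tm m = perFn tm m + perFn tm (m + 1) := by
    rw [sumFn_add_two]; push_cast; ring
  have pair (m : ℕ) : (3 * m + 3 : ℝ) ≤ 2 * (perFn tm m + perFn tm (m + 1)) ∧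
      (perFn tm m + perFn tm (m + 1) : ℝ) ≤ 3 * m + 5 := by
    exact_mod_cast perFn_tm_add_perFn_tm_succ m
  have hp₀ : (1 : ℝ) ≤ perFn tm 0 ∧ (perFn tm 0 : ℝ) ≤ 2 := by
    exact_mod_cast perFn_tm_of_even Even.zero
  have hsum₁ : (sumFn tm 1 : ℝ) = perFn tm 0 := by simp [sumFn]
  have hsum₂ : (sumFn tm 2 : ℝ) = perFn tm 0 + perFn tm 1 := by
    simp [sumFn, Finset.sum_range_succ]
  constructor
  · refine le_of_two_step_increment_le (n₀ := 1) (t := fun n ↦ (sumFn tm n : ℝ))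
      (s := fun n : ℕ ↦ 3 / 8 * ((n : ℝ) - 1) ^ 2 + n / 2) ?_ ?_ (fun m _ ↦ ?_) hn
    · simp only [hsum₁, Nat.cast_one]; linarith
    · simp only [hsum₂]; linarith [(pair 0).1]
    · simp only [increment]; push_cast; linarith [(pair m).1]
  · refine le_of_two_step_increment_le (n₀ := 0) (s := fun n ↦ (sumFn tm n : ℝ))
      (t := fun n : ℕ ↦ 3 / 4 * (n : ℝ) ^ 2 + n + 1) ?_ ?_ (fun m _ ↦ ?_) n.zero_le
    · simp [sumFn]
    · simp only [hsum₁]; linarith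
    · simp only [increment]; push_cast; linarith [(pair m).2]
end

section
/- For all n ≥ 1, the sum of the periodicity function of the Thue–Morse word over the even indices below n satisfies n/2 ≤ Σ_{0 ≤ i < n, i even} p_t(i) ≤ n + 1. -/
open Finset Filter Asymptotics

lemma tm_even (m : ℕ) :
    tm (2 * m) = if Even ((Nat.digits 2 m).count 1) then 0 else 1 := by
  rcases Nat.eq_zero_or_pos m with rfl | hm
  · simp [tm]
  · unfold tm
    rw [Nat.digits_def' (by norm_num : 1 < 2) (by positivity)]
    simp [Nat.mul_div_cancel_left _ (by norm_num : 0 < 2)]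

lemma tm_odd (m : ℕ) :
    tm (2 * m + 1) = if Even ((Nat.digits 2 m).count 1) then 1 else 0 := by
  unfold tm
  rw [Nat.digits_def' (by norm_num : 1 < 2) (by positivity)]
  have h1 : (2 * m + 1) % 2 = 1 := by omega
  have h2 : (2 * m + 1) / 2 = m := by omega
  rw [h1, h2, List.count_cons]
  simp [Nat.even_add_one]
  by_cases h : Even ((Nat.digits 2 m).count 1) <;> simp [h]

lemma tm_local (i : ℕ) (hi : Even i) :
    IsLocalPeriodAt tm i 1 ∨ IsLocalPeriodAt tm i 2 := by
  obtain ⟨j, rfl⟩ : ∃ j, i = 2 * j := by obtain ⟨j, hj⟩ := hi; exact ⟨j, by omega⟩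
  rcases Nat.eq_zero_or_pos j with rfl | hj
  · exact Or.inl ⟨le_refl 1, Or.inr ⟨one_pos, fun k hk => absurd hk (Nat.not_lt_zero k)⟩⟩
  obtain ⟨m, rfl⟩ : ∃ m, j = m + 1 := ⟨j - 1, by omega⟩
  by_cases h : (Even ((Nat.digits 2 (m+1)).count 1) ↔ Even ((Nat.digits 2 m).count 1))
  · -- local period 2
    refine Or.inr ⟨by norm_num, Or.inl ⟨by omega, fun k hk => ?_⟩⟩
    interval_cases k
    · have e1 : 2 * (m+1) + 0 = 2 * (m+1) := by ring
      have e2 : 2 * (m+1) - 2 + 0 = 2 * m := by omega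
      rw [e1, e2, tm_even, tm_even]
      by_cases hc : Even ((Nat.digits 2 m).count 1)
      · rw [if_pos hc, if_pos (h.mpr hc)]
      · rw [if_neg hc, if_neg (fun hc' => hc (h.mp hc'))]
    · have e1 : 2 * (m+1) + 1 = 2 * (m+1) + 1 := rfl
      have e2 : 2 * (m+1) - 2 + 1 = 2 * m + 1 := by omega
      rw [e2, tm_odd, tm_odd]
      by_cases hc : Even ((Nat.digits 2 m).count 1)
      · rw [if_pos hc, if_pos (h.mpr hc)]
      · rw [if_neg hc, if_neg (fun hc' => hc (h.mp hc'))]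
  · -- local period 1
    refine Or.inl ⟨le_refl 1, Or.inl ⟨by omega, fun k hk => ?_⟩⟩
    interval_cases k
    have e1 : 2 * (m+1) + 0 = 2 * (m+1) := by ring
    have e2 : 2 * (m+1) - 1 + 0 = 2 * m + 1 := by omega
    rw [e1, e2, tm_even, tm_odd]
    by_cases hc : Even ((Nat.digits 2 m).count 1)
    · rw [if_pos hc, if_neg (fun hc' => h ⟨fun _ => hc, fun _ => hc'⟩)]
    · rw [if_neg hc, if_pos (by tauto)]

lemma perFn_mem (i : ℕ) (hi : Even i) : 1 ≤ perFn tm i ∧ perFn tm i ≤ 2 := by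
  rcases tm_local i hi with h | h
  · have hne : {n | IsLocalPeriodAt tm i n}.Nonempty := ⟨1, h⟩
    exact ⟨(Nat.sInf_mem hne).1, le_trans (Nat.sInf_le h) one_le_two⟩
  · have hne : {n | IsLocalPeriodAt tm i n}.Nonempty := ⟨2, h⟩
    exact ⟨(Nat.sInf_mem hne).1, Nat.sInf_le h⟩

lemma card_even_range (n : ℕ) :
    ((Finset.range n).filter (fun i => Even i)).card = (n + 1) / 2 := by
  induction n with
  | zero => simp
  | succ n ih =>
    rw [Finset.range_add_one, Finset.filter_insert]
    by_cases h : Even n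
    · rw [if_pos h, Finset.card_insert_of_notMem (by simp), ih]
      have := Nat.even_iff.mp h; omega
    · rw [if_neg h, ih]
      have := Nat.odd_iff.mp (Nat.not_even_iff_odd.mp h); omega

theorem tm_perFn_even_sum_bounds (n : ℕ) (hn : 1 ≤ n) :
    (n : ℝ) / 2 ≤
        ((∑ i ∈ (Finset.range n).filter (fun i => Even i), perFn tm i : ℕ) : ℝ) ∧
      ((∑ i ∈ (Finset.range n).filter (fun i => Even i), perFn tm i : ℕ) : ℝ) ≤
        (n : ℝ) + 1 := by
  set F := (Finset.range n).filter (fun i => Even i) with hF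
  have hmem : ∀ i ∈ F, Even i := fun i hi => (Finset.mem_filter.mp hi).2
  have hlow : F.card * 1 ≤ ∑ i ∈ F, perFn tm i := by
    simpa using Finset.card_nsmul_le_sum F (perFn tm) 1
      (fun i hi => (perFn_mem i (hmem i hi)).1)
  have hhigh : ∑ i ∈ F, perFn tm i ≤ F.card * 2 := by
    simpa using Finset.sum_le_card_nsmul F (perFn tm) 2
      (fun i hi => (perFn_mem i (hmem i hi)).2)
  have hcard : F.card = (n + 1) / 2 := card_even_range n
  rw [hcard] at hlow hhigh
  constructor
  · rw [div_le_iff₀ (by norm_num : (0:ℝ) < 2)]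
    have : n ≤ (∑ i ∈ F, perFn tm i) * 2 := by omega
    exact_mod_cast this
  · have : (∑ i ∈ F, perFn tm i) ≤ n + 1 := by omega
    exact_mod_cast this
end
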